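/- arXiv:2304.00459 — 3 statements merged into one kernel-verified Lean document; each statement's English description precedes it below -/
import Mathlib

section
/- Single-step descent inequality for SGD under PL and WGC: suppose $f$ is $L$-smooth, $\mu$-PL with minimizer value $f(x^*)$, and satisfies the weak growth condition with parameter $\alpha$. For the SGD step $x^{k+1} = x^k - \eta \nabla f_{i_k}(x^k)$ with $i_k$ uniform on $\{1,\ldots,n\}$ and any $\eta > 0$, conditioning on $x^k$: $\mathbb{E}[f(x^{k+1}) \mid x^k] - f(x^*) \leq \left(1 - 2\mu\eta + L^2\eta^2\alpha\right)(f(x^k) - f(x^*))$. -/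
/-! The descent lemma for the `L`-smooth average `F`, applied at each sampled step and
averaged over `i`, bounds the expected next value by `F x - η ‖∇F x‖² + (L η² / 2) 𝔼‖∇fᵢ x‖²`,
since the sampled gradients average to `∇F x`. The weak growth condition bounds the
second-moment term by `α L (F x - F x*)` and the PL inequality bounds `‖∇F x‖²` below by
`2 μ (F x - F x*)`. -/

open RealInnerProductSpace

theorem image_one_le_of_hasDerivAt_le_add_mul {φ φ' : ℝ → ℝ} {K : ℝ}
    (hφ : ∀ t, HasDerivAt φ (φ' t) t) (hφ' : ∀ t ∈ Set.Icc (0 : ℝ) 1, φ' t ≤ φ' 0 + K * t) :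
    φ 1 ≤ φ 0 + φ' 0 + K / 2 := by
  have hB : ∀ t, HasDerivAt (fun t => φ 0 + t * φ' 0 + K / 2 * t ^ 2) (φ' 0 + K * t) t := by
    intro t
    refine ((((hasDerivAt_id' t).mul_const (φ' 0)).const_add (φ 0)).fun_add
      ((hasDerivAt_pow 2 t).const_mul (K / 2))).congr_deriv ?_
    norm_num
    ring
  simpa using image_le_of_deriv_right_le_deriv_boundary
    (fun t _ => (hφ t).continuousAt.continuousWithinAt) (fun t _ => (hφ t).hasDerivWithinAt)
    (by simp) (fun t _ => (hB t).continuousAt.continuousWithinAt)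
    (fun t _ => (hB t).hasDerivWithinAt) (fun t ht => hφ' t (Set.Ico_subset_Icc_self ht))
    (Set.right_mem_Icc.2 zero_le_one)

section InnerProductSpace

variable {E : Type*} [NormedAddCommGroup E] [InnerProductSpace ℝ E] [CompleteSpace E]

theorem HasGradientAt.hasDerivAt_comp_add_smul {F : E → ℝ} {x v : E} {t : ℝ} {g : E}
    (hF : HasGradientAt F g (x + t • v)) :
    HasDerivAt (fun s : ℝ => F (x + s • v)) ⟪g, v⟫ t := by
  have hline : HasDerivAt (fun s : ℝ => x + s • v) v t := by
    simpa using ((hasDerivAt_id t).smul_const v).const_add x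
  exact (hasGradientAt_iff_hasFDerivAt.mp hF).comp_hasDerivAt t hline

theorem le_add_inner_gradient_add_of_lipschitz_gradient {F : E → ℝ} (hF : Differentiable ℝ F)
    {L : ℝ} (hsmooth : ∀ x y, ‖gradient F x - gradient F y‖ ≤ L * ‖x - y‖) (x y : E) :
    F y ≤ F x + ⟪gradient F x, y - x⟫ + L / 2 * ‖y - x‖ ^ 2 := by
  set v := y - x
  have hφ : ∀ t : ℝ, HasDerivAt (fun s : ℝ => F (x + s • v)) ⟪gradient F (x + t • v), v⟫ t :=
    fun t => (hF _).hasGradientAt.hasDerivAt_comp_add_smul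
  have hφ' : ∀ t ∈ Set.Icc (0 : ℝ) 1,
      ⟪gradient F (x + t • v), v⟫ ≤ ⟪gradient F (x + (0 : ℝ) • v), v⟫ + L * ‖v‖ ^ 2 * t := by
    intro t ht
    rw [zero_smul, add_zero, ← sub_le_iff_le_add', ← inner_sub_left]
    calc ⟪gradient F (x + t • v) - gradient F x, v⟫
        ≤ ‖gradient F (x + t • v) - gradient F x‖ * ‖v‖ := real_inner_le_norm _ _
      _ ≤ L * ‖x + t • v - x‖ * ‖v‖ := by gcongr; exact hsmooth _ _
      _ = L * ‖v‖ ^ 2 * t := by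
        rw [add_sub_cancel_left, norm_smul, Real.norm_of_nonneg ht.1]
        ring
  have := image_one_le_of_hasDerivAt_le_add_mul hφ hφ'
  simp only [zero_smul, add_zero, one_smul, v, add_sub_cancel] at this
  linarith

theorem gradient_const_mul_sum {ι : Type*} (s : Finset ι) (c : ℝ) {f : ι → E → ℝ} {x : E}
    (hf : ∀ i ∈ s, DifferentiableAt ℝ (f i) x) :
    gradient (fun z => c * ∑ i ∈ s, f i z) x = c • ∑ i ∈ s, gradient (f i) x := by
  refine HasGradientAt.gradient ?_
  rw [hasGradientAt_iff_hasFDerivAt, map_smul, map_sum]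
  exact (HasFDerivAt.fun_sum fun i hi =>
    hasGradientAt_iff_hasFDerivAt.mp (hf i hi).hasGradientAt).const_mul c

theorem average_comp_sub_smul_le {F : E → ℝ} (hF : Differentiable ℝ F) {L : ℝ}
    (hsmooth : ∀ x y, ‖gradient F x - gradient F y‖ ≤ L * ‖x - y‖)
    {n : ℕ} (hn : 0 < n) {x : E} {g : Fin n → E} (hg : (n : ℝ)⁻¹ • ∑ i, g i = gradient F x)
    (η : ℝ) :
    (n : ℝ)⁻¹ * ∑ i, F (x - η • g i)
      ≤ F x - η * ‖gradient F x‖ ^ 2 + L * η ^ 2 / 2 * ((n : ℝ)⁻¹ * ∑ i, ‖g i‖ ^ 2) := by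
  have hstep : ∀ i, F (x - η • g i)
      ≤ F x - η * ⟪gradient F x, g i⟫ + L * η ^ 2 / 2 * ‖g i‖ ^ 2 := by
    intro i
    have := le_add_inner_gradient_add_of_lipschitz_gradient hF hsmooth x (x - η • g i)
    rw [sub_sub_cancel_left, inner_neg_right, real_inner_smul_right, norm_neg, norm_smul,
      mul_pow, Real.norm_eq_abs, sq_abs] at this
    linarith
  have hinner : (n : ℝ)⁻¹ * ∑ i, ⟪gradient F x, g i⟫ = ‖gradient F x‖ ^ 2 := by
    rw [← inner_sum, ← real_inner_smul_right, hg, real_inner_self_eq_norm_sq]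
  have hn0 : (n : ℝ) ≠ 0 := by positivity
  calc (n : ℝ)⁻¹ * ∑ i, F (x - η • g i)
      ≤ (n : ℝ)⁻¹ * ∑ i, (F x - η * ⟪gradient F x, g i⟫ + L * η ^ 2 / 2 * ‖g i‖ ^ 2) := by
        gcongr with i; exact hstep i
    _ = F x - η * ((n : ℝ)⁻¹ * ∑ i, ⟪gradient F x, g i⟫)
          + L * η ^ 2 / 2 * ((n : ℝ)⁻¹ * ∑ i, ‖g i‖ ^ 2) := by
        simp only [Finset.sum_add_distrib, Finset.sum_sub_distrib, Finset.sum_const,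
          Finset.card_univ, Fintype.card_fin, nsmul_eq_mul, ← Finset.mul_sum]
        field_simp
    _ = _ := by rw [hinner]

end InnerProductSpace

theorem sgd_single_step_pl_wgc_general
    (d n : ℕ) (hn : 0 < n)
    (f : Fin n → EuclideanSpace ℝ (Fin d) → ℝ)
    (hdiff : ∀ i, Differentiable ℝ (f i))
    (F : EuclideanSpace ℝ (Fin d) → ℝ)
    (hF : F = fun x => (n : ℝ)⁻¹ * ∑ i, f i x)
    (L μ α : ℝ) (hL : 0 < L) (hμ : 0 < μ)
    (hsmooth : ∀ x y : EuclideanSpace ℝ (Fin d),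
      ‖gradient F x - gradient F y‖ ≤ L * ‖x - y‖)
    (xstar : EuclideanSpace ℝ (Fin d))
    (hPL : ∀ x, F x - F xstar ≤ 1 / (2 * μ) * ‖gradient F x‖ ^ 2)
    (hWGC : ∀ x, (n : ℝ)⁻¹ * ∑ i, ‖gradient (f i) x‖ ^ 2
      ≤ 2 * α * L * (F x - F xstar))
    (η : ℝ) (hη : 0 < η)
    (x : EuclideanSpace ℝ (Fin d)) :
    ((n : ℝ)⁻¹ * ∑ i, F (x - η • gradient (f i) x)) - F xstar
      ≤ (1 - 2 * μ * η + L ^ 2 * η ^ 2 * α) * (F x - F xstar) := by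
  have hFdiff : Differentiable ℝ F :=
    hF ▸ (Differentiable.fun_sum fun i _ => hdiff i).const_mul _
  have hgrad : (n : ℝ)⁻¹ • ∑ i, gradient (f i) x = gradient F x := by
    rw [hF, gradient_const_mul_sum _ _ fun i _ => (hdiff i).differentiableAt]
  have hdescent := average_comp_sub_smul_le hFdiff hsmooth hn hgrad η
  have hPLx : 2 * μ * (F x - F xstar) ≤ ‖gradient F x‖ ^ 2 := by
    have := hPL x
    rwa [one_div_mul_eq_div, le_div_iff₀ (by positivity), mul_comm] at this
  have hWGCx := mul_le_mul_of_nonneg_left (hWGC x) (by positivity : 0 ≤ L * η ^ 2 / 2)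
  have hPLη := mul_le_mul_of_nonneg_left hPLx hη.le
  linear_combination hdescent + hWGCx + hPLη

/-- Single-step descent inequality for SGD under the PL condition and the weak
growth condition: conditioned on the current iterate `x`, the expected next
objective gap contracts by the factor `1 - 2μη + L²η²α`. -/
theorem sgd_single_step_pl_wgc
    (d n : ℕ) (hn : 0 < n)
    (f : Fin n → EuclideanSpace ℝ (Fin d) → ℝ)
    (hdiff : ∀ i, Differentiable ℝ (f i))
    (F : EuclideanSpace ℝ (Fin d) → ℝ)
    (hF : F = fun x => (n : ℝ)⁻¹ * ∑ i, f i x)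
    (L μ α : ℝ) (hL : 0 < L) (hμ : 0 < μ)
    (hsmooth : ∀ x y : EuclideanSpace ℝ (Fin d),
      ‖gradient F x - gradient F y‖ ≤ L * ‖x - y‖)
    (xstar : EuclideanSpace ℝ (Fin d))
    (hmin : ∀ x, F xstar ≤ F x)
    (hPL : ∀ x, F x - F xstar ≤ 1 / (2 * μ) * ‖gradient F x‖ ^ 2)
    (hWGC : ∀ x, (n : ℝ)⁻¹ * ∑ i, ‖gradient (f i) x‖ ^ 2
      ≤ 2 * α * L * (F x - F xstar))
    (η : ℝ) (hη : 0 < η)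
    (x : EuclideanSpace ℝ (Fin d)) :
    ((n : ℝ)⁻¹ * ∑ i, F (x - η • gradient (f i) x)) - F xstar
      ≤ (1 - 2 * μ * η + L ^ 2 * η ^ 2 * α) * (F x - F xstar) :=
  sgd_single_step_pl_wgc_general d n hn f hdiff F hF L μ α hL hμ hsmooth xstar hPL hWGC η hη x
end

section
/- Incremental gradient deviation bound under relaxed WGC: suppose each $f_i$ is $L_i$-smooth with $L_{\max} = \max_i L_i$, $f = \frac{1}{n}\sum_i f_i$ attains its minimum $f(x^*)$, and $\frac{1}{n}\sum_{i=1}^n\|\nabla f_i(x)\|^2 \leq 2\alpha L(f(x)-f(x^*)) + \sigma^2$ for all $x$. For one epoch of the incremental gradient method $x_{j+1} = x_j - \eta \nabla f_{j+1}(x_j)$, $j = 0,\ldots,n-1$, with $\eta \leq \frac{1}{\sqrt{2} n L_{\max}}$: $\sum_{i=0}^{n-1}\|x_i - x_0\|^2 \leq 4\eta^2 n^3 \alpha L(f(x_0) - f(x^*)) + 2\eta^2 n^3 \sigma^2$. -/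
/-!
Telescoping the steps bounds the deviation `‖x i - x 0‖` by `η` times the sum of the step
gradients seen so far, and smoothness bounds each of those by the gradient at `x 0` plus
`L_max ‖x j - x 0‖`. After Cauchy–Schwarz and summation over `i` the total squared deviation `S`
reappears on the right with coefficient `η² n² L_max² ≤ 1/2`, so it can be absorbed, leaving
`S ≤ 2 η² n² ∑ ‖∇f_j(x 0)‖²`; the relaxed weak growth condition at `x 0` bounds the last sum.
-/

open Finset

theorem sum_range_natCast_le_sq_div_two (n : ℕ) :
    ∑ i ∈ range n, (i : ℝ) ≤ n ^ 2 / 2 := by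
  have h : ((∑ i ∈ range n, i : ℕ) : ℝ) * 2 ≤ n ^ 2 := by
    exact_mod_cast (sum_range_id_mul_two n).trans_le (by nlinarith [n.sub_le 1])
  push_cast at h
  linarith

theorem sq_mul_le_half_of_le_one_div_sqrt_two_mul {η m : ℝ} (hη0 : 0 < η)
    (hη : η ≤ 1 / (√2 * m)) : (η * m) ^ 2 ≤ 1 / 2 := by
  have hpos : 0 < √2 * m := one_div_pos.mp (hη0.trans_le hη)
  have hle : η * (√2 * m) ≤ 1 := by rwa [le_div_iff₀ hpos] at hη
  have hsq : (η * (√2 * m)) ^ 2 = 2 * (η * m) ^ 2 := by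
    rw [mul_left_comm, mul_pow, Real.sq_sqrt zero_le_two]
  have hle_sq : (η * (√2 * m)) ^ 2 ≤ 1 := pow_le_one₀ (mul_pos hη0 hpos).le hle
  linarith

/-- A discrete Grönwall-type absorption: the self-referential `K * A j` terms cost only the
factor `2`. -/
theorem sum_sq_le_of_le_mul_sum_range {A q : ℕ → ℝ} {c K : ℝ} {n : ℕ}
    (hA : ∀ i < n, 0 ≤ A i) (hcK : (c * n * K) ^ 2 ≤ 1 / 2)
    (hrec : ∀ i < n, A i ≤ c * ∑ j ∈ range i, (q j + K * A j)) :
    ∑ i ∈ range n, A i ^ 2 ≤ 2 * c ^ 2 * n ^ 2 * ∑ i ∈ range n, q i ^ 2 := by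
  set S := ∑ i ∈ range n, A i ^ 2
  set G := ∑ i ∈ range n, q i ^ 2
  have hS : 0 ≤ S := sum_nonneg fun i _ => sq_nonneg _
  have hterm : ∀ i < n, A i ^ 2 ≤ 2 * c ^ 2 * (G + K ^ 2 * S) * i := by
    intro i hi
    calc A i ^ 2 ≤ (c * ∑ j ∈ range i, (q j + K * A j)) ^ 2 :=
          pow_le_pow_left₀ (hA i hi) (hrec i hi) 2
      _ = c ^ 2 * (∑ j ∈ range i, (q j + K * A j)) ^ 2 := mul_pow _ _ _
      _ ≤ c ^ 2 * (i * ∑ j ∈ range i, (q j + K * A j) ^ 2) := by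
          gcongr; simpa using sq_sum_le_card_mul_sum_sq (s := range i) (f := fun j => q j + K * A j)
      _ ≤ c ^ 2 * (i * ∑ j ∈ range n, 2 * (q j ^ 2 + (K * A j) ^ 2)) := by
          gcongr
          calc ∑ j ∈ range i, (q j + K * A j) ^ 2
              ≤ ∑ j ∈ range i, 2 * (q j ^ 2 + (K * A j) ^ 2) := sum_le_sum fun j _ => add_sq_le
            _ ≤ _ := sum_le_sum_of_subset_of_nonneg (range_subset_range.2 hi.le)
                fun j _ _ => by positivity
      _ = 2 * c ^ 2 * (G + K ^ 2 * S) * i := by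
          simp only [← mul_sum, sum_add_distrib, mul_pow, G, S]
          ring
  have hsum : S ≤ c ^ 2 * n ^ 2 * (G + K ^ 2 * S) :=
    calc S ≤ ∑ i ∈ range n, 2 * c ^ 2 * (G + K ^ 2 * S) * i :=
          sum_le_sum fun i hi => hterm i (mem_range.1 hi)
      _ = 2 * c ^ 2 * (G + K ^ 2 * S) * ∑ i ∈ range n, (i : ℝ) := (mul_sum _ _ _).symm
      _ ≤ 2 * c ^ 2 * (G + K ^ 2 * S) * (n ^ 2 / 2) := by
          gcongr; exact sum_range_natCast_le_sq_div_two n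
      _ = c ^ 2 * n ^ 2 * (G + K ^ 2 * S) := by ring
  have habsorb : (c * n * K) ^ 2 * S ≤ 1 / 2 * S := mul_le_mul_of_nonneg_right hcK hS
  linarith

section Descent

variable {E : Type*} [SeminormedAddCommGroup E] [NormedSpace ℝ E]

theorem norm_sub_zero_le_mul_sum_norm_of_descent {x v : ℕ → E} {η : ℝ} {i : ℕ} (hη : 0 ≤ η)
    (hstep : ∀ j < i, x (j + 1) = x j - η • v j) :
    ‖x i - x 0‖ ≤ η * ∑ j ∈ range i, ‖v j‖ := by
  rw [← sum_range_sub x i, mul_sum]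
  calc ‖∑ j ∈ range i, (x (j + 1) - x j)‖ = ‖∑ j ∈ range i, -(η • v j)‖ := by
        congr 1
        exact sum_congr rfl fun j hj => by rw [hstep j (mem_range.1 hj)]; abel
    _ ≤ ∑ j ∈ range i, ‖-(η • v j)‖ := norm_sum_le _ _
    _ = ∑ j ∈ range i, η * ‖v j‖ := by
        simp only [norm_neg, norm_smul, Real.norm_of_nonneg hη]

theorem sum_norm_sub_zero_sq_le_of_lipschitz_descent {x : ℕ → E} {g : ℕ → E → E} {η K : ℝ}
    {n : ℕ} (hη : 0 ≤ η) (hηK : (η * n * K) ^ 2 ≤ 1 / 2)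
    (hlip : ∀ j < n, ∀ u w, ‖g j u - g j w‖ ≤ K * ‖u - w‖)
    (hstep : ∀ j < n, x (j + 1) = x j - η • g j (x j)) :
    ∑ i ∈ range n, ‖x i - x 0‖ ^ 2 ≤ 2 * η ^ 2 * n ^ 2 * ∑ j ∈ range n, ‖g j (x 0)‖ ^ 2 := by
  refine sum_sq_le_of_le_mul_sum_range (fun i _ => norm_nonneg _) hηK fun i hi => ?_
  calc ‖x i - x 0‖ ≤ η * ∑ j ∈ range i, ‖g j (x j)‖ :=
        norm_sub_zero_le_mul_sum_norm_of_descent hη fun j hj => hstep j (hj.trans hi)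
    _ ≤ η * ∑ j ∈ range i, (‖g j (x 0)‖ + K * ‖x j - x 0‖) := by
        gcongr with j hj
        calc ‖g j (x j)‖ ≤ ‖g j (x 0)‖ + ‖g j (x j) - g j (x 0)‖ :=
              norm_le_norm_add_norm_sub' _ _
          _ ≤ ‖g j (x 0)‖ + K * ‖x j - x 0‖ := by
              gcongr; exact hlip j ((mem_range.1 hj).trans hi) _ _

end Descent

theorem ig_deviation_bound_relaxed_wgc_general
    (d n : ℕ) (hn : 0 < n)
    (f : Fin n → EuclideanSpace ℝ (Fin d) → ℝ)
    (F : EuclideanSpace ℝ (Fin d) → ℝ)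
    (L Lmax : ℝ)
    (hsmooth_i : ∀ i, ∀ x y : EuclideanSpace ℝ (Fin d),
      ‖gradient (f i) x - gradient (f i) y‖ ≤ Lmax * ‖x - y‖)
    (xstar : EuclideanSpace ℝ (Fin d))
    (α σ : ℝ)
    (hWGC : ∀ x, (n : ℝ)⁻¹ * ∑ i, ‖gradient (f i) x‖ ^ 2
      ≤ 2 * α * L * (F x - F xstar) + σ ^ 2)
    (η : ℝ) (hη0 : 0 < η) (hη : η ≤ 1 / (Real.sqrt 2 * n * Lmax))
    (x : ℕ → EuclideanSpace ℝ (Fin d))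
    (hstep : ∀ j (h : j < n), x (j + 1) = x j - η • gradient (f ⟨j, h⟩) (x j)) :
    ∑ i ∈ Finset.range n, ‖x i - x 0‖ ^ 2
      ≤ 4 * η ^ 2 * n ^ 3 * α * L * (F (x 0) - F xstar)
        + 2 * η ^ 2 * n ^ 3 * σ ^ 2 := by
  let g : ℕ → EuclideanSpace ℝ (Fin d) → EuclideanSpace ℝ (Fin d) :=
    fun j => if h : j < n then gradient (f ⟨j, h⟩) else 0
  have hg : ∀ j (h : j < n), g j = gradient (f ⟨j, h⟩) := fun j h => dif_pos h
  have hηK : (η * n * Lmax) ^ 2 ≤ 1 / 2 := by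
    rw [mul_assoc] at hη ⊢
    exact sq_mul_le_half_of_le_one_div_sqrt_two_mul hη0 hη
  have hdev := sum_norm_sub_zero_sq_le_of_lipschitz_descent (g := g) hη0.le hηK
    (fun j hj => hg j hj ▸ hsmooth_i ⟨j, hj⟩) (fun j hj => hg j hj ▸ hstep j hj)
  have hgrad : ∑ j ∈ range n, ‖g j (x 0)‖ ^ 2 = ∑ i, ‖gradient (f i) (x 0)‖ ^ 2 := by
    rw [← Fin.sum_univ_eq_sum_range (fun j => ‖g j (x 0)‖ ^ 2)]
    exact sum_congr rfl fun i _ => by rw [hg i i.isLt]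
  have hgrowth : ∑ i, ‖gradient (f i) (x 0)‖ ^ 2
      ≤ n * (2 * α * L * (F (x 0) - F xstar) + σ ^ 2) :=
    (inv_mul_le_iff₀ (Nat.cast_pos.2 hn)).1 (hWGC (x 0))
  calc ∑ i ∈ range n, ‖x i - x 0‖ ^ 2
      ≤ 2 * η ^ 2 * n ^ 2 * (n * (2 * α * L * (F (x 0) - F xstar) + σ ^ 2)) := by
        rw [hgrad] at hdev
        exact hdev.trans (by gcongr)
    _ = _ := by ring

/-- Incremental gradient within-epoch deviation bound under the relaxed weak
growth condition. -/
theorem ig_deviation_bound_relaxed_wgc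
    (d n : ℕ) (hn : 0 < n)
    (f : Fin n → EuclideanSpace ℝ (Fin d) → ℝ)
    (hdiff : ∀ i, Differentiable ℝ (f i))
    (F : EuclideanSpace ℝ (Fin d) → ℝ)
    (hF : F = fun x => (n : ℝ)⁻¹ * ∑ i, f i x)
    (L Lmax : ℝ) (hL : 0 < L) (hLmax : 0 < Lmax)
    (hsmooth : ∀ x y : EuclideanSpace ℝ (Fin d),
      ‖gradient F x - gradient F y‖ ≤ L * ‖x - y‖)
    (hsmooth_i : ∀ i, ∀ x y : EuclideanSpace ℝ (Fin d),
      ‖gradient (f i) x - gradient (f i) y‖ ≤ Lmax * ‖x - y‖)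
    (xstar : EuclideanSpace ℝ (Fin d))
    (hmin : ∀ x, F xstar ≤ F x)
    (α σ : ℝ) (hα : 0 ≤ α) (hσ : 0 ≤ σ)
    (hWGC : ∀ x, (n : ℝ)⁻¹ * ∑ i, ‖gradient (f i) x‖ ^ 2
      ≤ 2 * α * L * (F x - F xstar) + σ ^ 2)
    (η : ℝ) (hη0 : 0 < η) (hη : η ≤ 1 / (Real.sqrt 2 * n * Lmax))
    (x : ℕ → EuclideanSpace ℝ (Fin d))
    (hstep : ∀ j (h : j < n), x (j + 1) = x j - η • gradient (f ⟨j, h⟩) (x j)) :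
    ∑ i ∈ Finset.range n, ‖x i - x 0‖ ^ 2
      ≤ 4 * η ^ 2 * n ^ 3 * α * L * (F (x 0) - F xstar)
        + 2 * η ^ 2 * n ^ 3 * σ ^ 2 :=
  ig_deviation_bound_relaxed_wgc_general d n hn f F L Lmax hsmooth_i xstar α σ hWGC η hη0 hη x hstep
end

section
/- Theorem (IG + PL under relaxed SGC): suppose $f = \frac{1}{n}\sum_i f_i$ is $L$-smooth and $\mu$-PL with minimum $f(x^*)$, each $f_i$ is $L_{\max}$-smooth, and $\frac{1}{n}\sum_i\|\nabla f_i(x)\|^2 \leq \rho\|\nabla f(x)\|^2 + \sigma^2$ for all $x$. Run the incremental gradient method (fixed order $1, 2, \ldots, n$ each epoch) for $T$ epochs with step size $\eta \leq \min\{\frac{1}{\sqrt{2}nL_{\max}}, \frac{1}{2L_{\max}n\sqrt{\rho}}\}$. Then $f(x_n^T) - f(x^*) \leq \left(1 - \frac{n\mu\eta}{2}\right)^T(f(x^0) - f(x^*)) + \frac{2 L_{\max}^2 \eta^2 n^2 \sigma^2}{\mu}$. -/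
/-!
One epoch unrolls to `x_n = y - η ∑ᵢ ∇fᵢ(xᵢ)`, a single gradient step of length `nη` on `F` with
error `e = ∑ᵢ (∇fᵢ(xᵢ) - ∇fᵢ(y))`. Since `xᵢ - y` is a sum of `i` earlier steps, `Lmax`-smoothness
of the `fᵢ` bounds `‖e‖²` by `2 η² Lmax² n³ ∑ᵢ ‖∇fᵢ(y)‖²`, and the relaxed growth condition turns
this into `n (ρ ‖∇F(y)‖² + σ²)`. The descent lemma for `F` then gives
`F(x_n) ≤ F(y) - (nη/4) ‖∇F(y)‖² + Lmax² η³ n³ σ²`; the PL inequality makes this a contraction by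
`1 - nμη/2` of the optimality gap plus noise, and summing the geometric series gives the bound.
-/
noncomputable section

/-- One epoch of incremental-gradient updates in the fixed order `1, …, n`:
the iterate after `j` steps starting from `x0`, with gradient oracle `g` and
step size `η`. -/
def igIter {d n : ℕ}
    (g : Fin n → EuclideanSpace ℝ (Fin d) → EuclideanSpace ℝ (Fin d))
    (η : ℝ) (x0 : EuclideanSpace ℝ (Fin d)) :
    ℕ → EuclideanSpace ℝ (Fin d)
  | 0 => x0
  | j + 1 =>
      if h : j < n then
        igIter g η x0 j - η • g ⟨j, h⟩ (igIter g η x0 j)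
      else igIter g η x0 j

open Finset Set
open scoped InnerProductSpace

section

variable {E : Type*} [SeminormedAddCommGroup E]

theorem norm_sum_sq_le_card_mul_sum_norm_sq {ι : Type*} (s : Finset ι) (v : ι → E) :
    ‖∑ i ∈ s, v i‖ ^ 2 ≤ #s * ∑ i ∈ s, ‖v i‖ ^ 2 :=
  (pow_le_pow_left₀ (norm_nonneg _) (norm_sum_le s v) 2).trans (sq_sum_le_card_mul_sum_sq ..)

end

theorem sum_range_natCast_le (n : ℕ) : ∑ k ∈ range n, (k : ℝ) ≤ n ^ 2 / 2 := by
  have h : (∑ k ∈ range n, k) * 2 ≤ n ^ 2 := by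
    rw [sum_range_id_mul_two, sq]
    exact Nat.mul_le_mul_left n (Nat.sub_le n 1)
  have : ((∑ k ∈ range n, k : ℕ) : ℝ) * 2 ≤ (n : ℝ) ^ 2 := by exact_mod_cast h
  push_cast at this
  linarith

theorem pos_and_mul_le_one_of_le_one_div {η a : ℝ} (hη : 0 < η) (h : η ≤ 1 / a) :
    0 < a ∧ η * a ≤ 1 := by
  have ha : 0 < a := by
    by_contra! ha
    linarith [one_div_nonpos.2 ha]
  exact ⟨ha, (le_div_iff₀ ha).1 h⟩

theorem le_pow_mul_add_div_of_le_mul_add {a : ℕ → ℝ} {q c : ℝ} (hq0 : 0 ≤ q) (hq1 : q < 1)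
    (hc : 0 ≤ c) (h : ∀ t, a (t + 1) ≤ q * a t + c) (T : ℕ) :
    a T ≤ q ^ T * a 0 + c / (1 - q) := by
  have h1q : 0 < 1 - q := sub_pos.2 hq1
  induction T with
  | zero => simpa using div_nonneg hc h1q.le
  | succ T ih =>
    calc a (T + 1) ≤ q * (q ^ T * a 0 + c / (1 - q)) + c :=
          (h T).trans (by gcongr)
      _ = q ^ (T + 1) * a 0 + c / (1 - q) := by field_simp; ring

section SmoothFunctions

variable {E : Type*} [NormedAddCommGroup E] [InnerProductSpace ℝ E] [CompleteSpace E]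

theorem le_add_inner_gradient_add_sq_of_lipschitz {F : E → ℝ} (hF : Differentiable ℝ F) {L : ℝ}
    (hlip : ∀ x y, ‖gradient F x - gradient F y‖ ≤ L * ‖x - y‖) (x y : E) :
    F y ≤ F x + ⟪gradient F x, y - x⟫_ℝ + L / 2 * ‖y - x‖ ^ 2 := by
  set v := y - x
  set φ : ℝ → ℝ := fun t => F (x + t • v) - t * ⟪gradient F x, v⟫_ℝ - L / 2 * t ^ 2 * ‖v‖ ^ 2
  have hφ : ∀ t, HasDerivAt φ
      (⟪gradient F (x + t • v), v⟫_ℝ - ⟪gradient F x, v⟫_ℝ - L * t * ‖v‖ ^ 2) t := by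
    intro t
    have hline : HasDerivAt (fun t : ℝ => x + t • v) v t := by
      simpa using ((hasDerivAt_id t).smul_const v).const_add x
    have hFt := (hF (x + t • v)).hasGradientAt.hasFDerivAt.comp_hasDerivAt t hline
    rw [InnerProductSpace.toDual_apply_apply] at hFt
    have h := (hFt.sub ((hasDerivAt_id t).mul_const ⟪gradient F x, v⟫_ℝ)).sub
      (((hasDerivAt_pow 2 t).const_mul (L / 2)).mul_const (‖v‖ ^ 2))
    exact h.congr_deriv (by simp only [Nat.cast_ofNat]; ring)
  have hanti : AntitoneOn φ (Icc 0 1) := by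
    refine antitoneOn_of_hasDerivWithinAt_nonpos (convex_Icc 0 1)
      (HasDerivAt.continuousOn fun t _ => hφ t) (fun t _ => (hφ t).hasDerivWithinAt) ?_
    intro t ht
    rw [interior_Icc] at ht
    have hdist : ‖gradient F (x + t • v) - gradient F x‖ ≤ L * (t * ‖v‖) := by
      simpa [norm_smul, abs_of_pos ht.1] using hlip (x + t • v) x
    have := real_inner_le_norm (gradient F (x + t • v) - gradient F x) v
    rw [inner_sub_left] at this
    nlinarith [norm_nonneg v]
  have := hanti (left_mem_Icc.2 zero_le_one) (right_mem_Icc.2 zero_le_one) zero_le_one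
  simp only [φ, v, one_smul, add_sub_cancel, zero_smul, add_zero] at this
  linarith

theorem norm_gradient_sq_le_two_mul_sub_min {F : E → ℝ} (hF : Differentiable ℝ F) {L : ℝ}
    (hL : 0 < L) (hlip : ∀ x y, ‖gradient F x - gradient F y‖ ≤ L * ‖x - y‖)
    {xstar : E} (hmin : ∀ x, F xstar ≤ F x) (x : E) :
    ‖gradient F x‖ ^ 2 ≤ 2 * L * (F x - F xstar) := by
  have hstep := le_add_inner_gradient_add_sq_of_lipschitz hF hlip x (x - L⁻¹ • gradient F x)
  rw [sub_sub_cancel_left, inner_neg_right, real_inner_smul_right, real_inner_self_eq_norm_sq,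
    norm_neg, norm_smul, Real.norm_of_nonneg (inv_nonneg.2 hL.le)] at hstep
  have hdrop : F xstar ≤ F x - ‖gradient F x‖ ^ 2 / (2 * L) := by
    refine (hmin _).trans (hstep.trans_eq ?_)
    field_simp
    ring
  rw [← div_le_iff₀' (by positivity)]
  linarith

theorem sub_eq_zero_of_pl_of_lt {F : E → ℝ} (hF : Differentiable ℝ F) {L μ : ℝ} (hL : 0 < L)
    (hlip : ∀ x y, ‖gradient F x - gradient F y‖ ≤ L * ‖x - y‖)
    {xstar : E} (hmin : ∀ x, F xstar ≤ F x)
    (hPL : ∀ x, 2 * μ * (F x - F xstar) ≤ ‖gradient F x‖ ^ 2) (hLμ : L < μ) (x : E) :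
    F x - F xstar = 0 := by
  nlinarith [norm_gradient_sq_le_two_mul_sub_min hF hL hlip hmin x, hPL x, hmin x]

theorem inexact_gradient_step_le {F : E → ℝ} (hF : Differentiable ℝ F) {L : ℝ}
    (hlip : ∀ x y, ‖gradient F x - gradient F y‖ ≤ L * ‖x - y‖)
    {η m : ℝ} (hη : 0 ≤ η) (hm : 0 < m) (hLηm : L * η * m ≤ 1) (y b : E) :
    F (y - η • b) ≤ F y - η * m / 2 * ‖gradient F y‖ ^ 2
      + η / (2 * m) * ‖b - m • gradient F y‖ ^ 2 := by
  have hstep := le_add_inner_gradient_add_sq_of_lipschitz hF hlip y (y - η • b)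
  rw [sub_sub_cancel_left, inner_neg_right, real_inner_smul_right, norm_neg, norm_smul,
    Real.norm_of_nonneg hη] at hstep
  -- polarization: `2 m ⟪∇F y, b⟫ = m² ‖∇F y‖² + ‖b‖² - ‖b - m ∇F y‖²`
  have hpolar := norm_sub_sq_real b (m • gradient F y)
  rw [real_inner_smul_right, norm_smul, Real.norm_of_nonneg hm.le, real_inner_comm] at hpolar
  have hgap : 0 ≤ η / (2 * m) * (‖b‖ ^ 2 * (1 - L * η * m)) := by
    have := sub_nonneg.2 hLηm
    positivity
  have hgap_eq : F y - η * m / 2 * ‖gradient F y‖ ^ 2 + η / (2 * m) * ‖b - m • gradient F y‖ ^ 2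
      - (F y + -(η * ⟪gradient F y, b⟫_ℝ) + L / 2 * (η * ‖b‖) ^ 2)
      = η / (2 * m) * (‖b‖ ^ 2 * (1 - L * η * m)) := by
    rw [hpolar]; field_simp; ring
  linarith

theorem hasGradientAt_const_mul_sum {ι : Type*} (s : Finset ι) {f : ι → E → ℝ}
    (hf : ∀ i, Differentiable ℝ (f i)) (c : ℝ) (x : E) :
    HasGradientAt (fun x => c * ∑ i ∈ s, f i x) (c • ∑ i ∈ s, gradient (f i) x) x := by
  rw [hasGradientAt_iff_hasFDerivAt]
  have hsum : HasFDerivAt (fun x => ∑ i ∈ s, f i x)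
      (∑ i ∈ s, InnerProductSpace.toDual ℝ E (gradient (f i) x)) x :=
    HasFDerivAt.fun_sum fun i _ => (hf i x).hasGradientAt.hasFDerivAt
  exact (hsum.const_mul c).congr_fderiv (by simp only [map_smul, map_sum])

end SmoothFunctions

section IncrementalGradient

variable {d n : ℕ} (g : Fin n → EuclideanSpace ℝ (Fin d) → EuclideanSpace ℝ (Fin d))
  (η : ℝ) (y : EuclideanSpace ℝ (Fin d))

def igDir (k : ℕ) : EuclideanSpace ℝ (Fin d) :=
  if h : k < n then g ⟨k, h⟩ (igIter g η y k) else 0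

theorem igIter_succ (k : ℕ) : igIter g η y (k + 1) = igIter g η y k - η • igDir g η y k := by
  rw [igIter, igDir]
  split_ifs <;> simp

theorem igIter_sub_eq_neg_smul_sum (j : ℕ) :
    igIter g η y j - y = -(η • ∑ k ∈ range j, igDir g η y k) := by
  induction j with
  | zero => simp [igIter]
  | succ j ih =>
    rw [igIter_succ, sum_range_succ, smul_add, neg_add, ← ih]
    abel

theorem sum_range_comp_igDir {M : Type*} [AddCommMonoid M] (φ : EuclideanSpace ℝ (Fin d) → M) :
    ∑ k ∈ range n, φ (igDir g η y k) = ∑ i, φ (g i (igIter g η y i)) := by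
  rw [← Fin.sum_univ_eq_sum_range]
  simp [igDir]

theorem igIter_eq_sub_smul_sum : igIter g η y n = y - η • ∑ i, g i (igIter g η y i) := by
  have h := sum_range_comp_igDir g η y id
  simp only [id] at h
  rw [← h, sub_eq_add_neg, ← igIter_sub_eq_neg_smul_sum]
  abel

theorem norm_igIter_sub_sq_le {j : ℕ} (hj : j ≤ n) :
    ‖igIter g η y j - y‖ ^ 2 ≤ η ^ 2 * j * ∑ i, ‖g i (igIter g η y i)‖ ^ 2 := by
  rw [igIter_sub_eq_neg_smul_sum, norm_neg, norm_smul, mul_pow, Real.norm_eq_abs, sq_abs,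
    mul_assoc, ← sum_range_comp_igDir g η y (‖·‖ ^ 2)]
  gcongr
  calc ‖∑ k ∈ range j, igDir g η y k‖ ^ 2 ≤ j * ∑ k ∈ range j, ‖igDir g η y k‖ ^ 2 := by
        simpa using norm_sum_sq_le_card_mul_sum_norm_sq (range j) (igDir g η y)
    _ ≤ j * ∑ k ∈ range n, ‖igDir g η y k‖ ^ 2 := by
        gcongr

theorem sum_norm_igIter_sub_sq_le :
    ∑ i : Fin n, ‖igIter g η y i - y‖ ^ 2
      ≤ η ^ 2 * n ^ 2 / 2 * ∑ i, ‖g i (igIter g η y i)‖ ^ 2 := by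
  set S := ∑ i, ‖g i (igIter g η y i)‖ ^ 2
  calc ∑ i : Fin n, ‖igIter g η y i - y‖ ^ 2 ≤ ∑ i : Fin n, η ^ 2 * S * (i : ℕ) :=
        sum_le_sum fun i _ => by simpa [mul_right_comm] using norm_igIter_sub_sq_le g η y i.isLt.le
    _ = η ^ 2 * S * ∑ k ∈ range n, (k : ℝ) := by
        rw [← mul_sum, Fin.sum_univ_eq_sum_range (fun k => (k : ℝ))]
    _ ≤ η ^ 2 * S * (n ^ 2 / 2) := by
        have : 0 ≤ S := sum_nonneg fun _ _ => by positivity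
        gcongr
        exact sum_range_natCast_le n
    _ = η ^ 2 * n ^ 2 / 2 * S := by ring

end IncrementalGradient

section EpochAnalysis

variable {d n : ℕ} (g : Fin n → EuclideanSpace ℝ (Fin d) → EuclideanSpace ℝ (Fin d))
  {η : ℝ} (y : EuclideanSpace ℝ (Fin d))

theorem norm_sum_igIter_sub_sum_sq_le {K : ℝ} (hg : ∀ i x x', ‖g i x - g i x'‖ ≤ K * ‖x - x'‖)
    (hη : 2 * (η * K * n) ^ 2 ≤ 1) :
    ‖∑ i, g i (igIter g η y i) - ∑ i, g i y‖ ^ 2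
      ≤ 2 * (η * K * n) ^ 2 * n * ∑ i, ‖g i y‖ ^ 2 := by
  set S := ∑ i, ‖g i (igIter g η y i)‖ ^ 2
  set S₀ := ∑ i, ‖g i y‖ ^ 2
  set V := ∑ i, ‖g i (igIter g η y i) - g i y‖ ^ 2
  have hS : 0 ≤ S := sum_nonneg fun _ _ => by positivity
  have hV : V ≤ K ^ 2 * (η ^ 2 * n ^ 2 / 2 * S) := by
    calc V ≤ ∑ i : Fin n, K ^ 2 * ‖igIter g η y i - y‖ ^ 2 := by
          refine sum_le_sum fun i _ => ?_
          rw [← mul_pow]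
          exact pow_le_pow_left₀ (norm_nonneg _) (hg i _ _) 2
      _ ≤ K ^ 2 * (η ^ 2 * n ^ 2 / 2 * S) := by
          rw [← mul_sum]
          gcongr
          exact sum_norm_igIter_sub_sq_le g η y
  -- the drift of the iterates costs at most half of `S`, so `S ≤ 4 S₀`
  have hSS₀ : S ≤ 4 * S₀ := by
    have hsplit : S ≤ 2 * S₀ + 2 * V := by
      rw [mul_sum, mul_sum, ← sum_add_distrib]
      refine sum_le_sum fun i _ => ?_
      have := norm_le_norm_add_norm_sub' (g i (igIter g η y i)) (g i y)
      nlinarith [add_sq_le (a := ‖g i y‖) (b := ‖g i (igIter g η y i) - g i y‖),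
        norm_nonneg (g i (igIter g η y i))]
    nlinarith [mul_le_mul_of_nonneg_right hη hS]
  calc ‖∑ i, g i (igIter g η y i) - ∑ i, g i y‖ ^ 2 ≤ n * V := by
        simpa [← sum_sub_distrib] using norm_sum_sq_le_card_mul_sum_norm_sq univ
          fun i => g i (igIter g η y i) - g i y
    _ ≤ n * (K ^ 2 * (η ^ 2 * n ^ 2 / 2 * (4 * S₀))) := by gcongr; exact hV.trans (by gcongr)
    _ = 2 * (η * K * n) ^ 2 * n * S₀ := by ring

theorem igIter_epoch_descent {F : EuclideanSpace ℝ (Fin d) → ℝ} (hF : Differentiable ℝ F)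
    {L K ρ σ : ℝ} (hn : 0 < n)
    (hlip : ∀ x x', ‖gradient F x - gradient F x'‖ ≤ L * ‖x - x'‖)
    (hg : ∀ i x x', ‖g i x - g i x'‖ ≤ K * ‖x - x'‖)
    (hsum : ∀ x, ∑ i, g i x = (n : ℝ) • gradient F x)
    (hgrowth : ∀ x, (n : ℝ)⁻¹ * ∑ i, ‖g i x‖ ^ 2 ≤ ρ * ‖gradient F x‖ ^ 2 + σ ^ 2)
    (hLK : L ≤ K) (hη : 0 ≤ η) (hstep : 2 * (η * K * n) ^ 2 ≤ 1)
    (hstepρ : 4 * (η * K * n) ^ 2 * ρ ≤ 1) :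
    F (igIter g η y n) ≤ F y - η * n / 4 * ‖gradient F y‖ ^ 2 + K ^ 2 * η ^ 3 * n ^ 3 * σ ^ 2 := by
  have hnR : (0 : ℝ) < n := Nat.cast_pos.2 hn
  have hLηn : L * η * n ≤ 1 := by
    have : η * K * n ≤ 1 := by nlinarith [sq_nonneg (η * K * n - 1)]
    nlinarith [mul_le_mul_of_nonneg_right hLK (mul_nonneg hη hnR.le)]
  have hdesc := inexact_gradient_step_le hF hlip hη hnR hLηn y (∑ i, g i (igIter g η y i))
  rw [← hsum y] at hdesc
  have hS₀ : ∑ i, ‖g i y‖ ^ 2 ≤ n * (ρ * ‖gradient F y‖ ^ 2 + σ ^ 2) := by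
    have := mul_le_mul_of_nonneg_left (hgrowth y) hnR.le
    rwa [← mul_assoc, mul_inv_cancel₀ hnR.ne', one_mul] at this
  set N := ‖gradient F y‖ ^ 2
  have hN : 0 ≤ η * n * N := by positivity
  calc F (igIter g η y n)
      ≤ F y - η * n / 2 * N + η / (2 * n) * ‖∑ i, g i (igIter g η y i) - ∑ i, g i y‖ ^ 2 := by
        rwa [igIter_eq_sub_smul_sum]
    _ ≤ F y - η * n / 2 * N + η / (2 * n) * (2 * (η * K * n) ^ 2 * n * (n * (ρ * N + σ ^ 2))) := by
        gcongr
        exact (norm_sum_igIter_sub_sum_sq_le g y hg hstep).trans (by gcongr)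
    _ = F y - η * n / 2 * N + (η * K * n) ^ 2 * ρ * (η * n * N)
          + K ^ 2 * η ^ 3 * n ^ 3 * σ ^ 2 := by
        field_simp; ring
    _ ≤ F y - η * n / 4 * N + K ^ 2 * η ^ 3 * n ^ 3 * σ ^ 2 := by
        nlinarith [mul_le_mul_of_nonneg_right hstepρ hN]

end EpochAnalysis

theorem stepsize_sq_bounds {η Lmax ρ : ℝ} {n : ℕ} (hη0 : 0 < η)
    (hη : η ≤ min (1 / (Real.sqrt 2 * n * Lmax)) (1 / (2 * Lmax * n * Real.sqrt ρ))) :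
    2 * (η * Lmax * n) ^ 2 ≤ 1 ∧ 4 * (η * Lmax * n) ^ 2 * ρ ≤ 1 := by
  obtain ⟨h₁pos, h₁⟩ := pos_and_mul_le_one_of_le_one_div hη0 (hη.trans (min_le_left _ _))
  obtain ⟨h₂pos, h₂⟩ := pos_and_mul_le_one_of_le_one_div hη0 (hη.trans (min_le_right _ _))
  have hρ : 0 ≤ ρ := by
    by_contra! hρ
    simp [Real.sqrt_eq_zero'.2 hρ.le] at h₂pos
  have h₁sq := pow_le_one₀ (mul_pos hη0 h₁pos).le h₁ (n := 2)
  have h₂sq := pow_le_one₀ (mul_pos hη0 h₂pos).le h₂ (n := 2)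
  simp only [mul_pow, Real.sq_sqrt zero_le_two, Real.sq_sqrt hρ] at h₁sq h₂sq
  constructor <;> linarith

theorem ig_pl_relaxed_sgc_rate_general
    (d n : ℕ) (hn : 0 < n)
    (f : Fin n → EuclideanSpace ℝ (Fin d) → ℝ)
    (hdiff : ∀ i, Differentiable ℝ (f i))
    (F : EuclideanSpace ℝ (Fin d) → ℝ)
    (hF : F = fun x => (n : ℝ)⁻¹ * ∑ i, f i x)
    (L Lmax μ : ℝ) (hL : 0 < L) (hμ : 0 < μ) (hLLmax : L ≤ Lmax)
    (hsmooth : ∀ x y : EuclideanSpace ℝ (Fin d),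
      ‖gradient F x - gradient F y‖ ≤ L * ‖x - y‖)
    (hsmooth_i : ∀ i, ∀ x y : EuclideanSpace ℝ (Fin d),
      ‖gradient (f i) x - gradient (f i) y‖ ≤ Lmax * ‖x - y‖)
    (xstar : EuclideanSpace ℝ (Fin d))
    (hmin : ∀ x, F xstar ≤ F x)
    (hPL : ∀ x, F x - F xstar ≤ 1 / (2 * μ) * ‖gradient F x‖ ^ 2)
    (ρ σ : ℝ)
    (hSGC : ∀ x, (n : ℝ)⁻¹ * ∑ i, ‖gradient (f i) x‖ ^ 2
      ≤ ρ * ‖gradient F x‖ ^ 2 + σ ^ 2)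
    (η : ℝ) (hη0 : 0 < η)
    (hη : η ≤ min (1 / (Real.sqrt 2 * n * Lmax)) (1 / (2 * Lmax * n * Real.sqrt ρ)))
    (x0 : EuclideanSpace ℝ (Fin d)) (T : ℕ) :
    F ((fun y => igIter (fun i => gradient (f i)) η y n)^[T] x0) - F xstar
      ≤ (1 - n * μ * η / 2) ^ T * (F x0 - F xstar)
        + 2 * Lmax ^ 2 * η ^ 2 * n ^ 2 * σ ^ 2 / μ := by
  have hnR : (0 : ℝ) < n := Nat.cast_pos.2 hn
  have hFdiff : Differentiable ℝ F := hF ▸ fun x =>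
    (hasGradientAt_const_mul_sum univ hdiff _ x).differentiableAt
  have hsum : ∀ x, ∑ i, gradient (f i) x = (n : ℝ) • gradient F x := fun x => by
    rw [hF, (hasGradientAt_const_mul_sum univ hdiff _ x).gradient, smul_smul,
      mul_inv_cancel₀ hnR.ne', one_smul]
  obtain ⟨hstep, hstepρ⟩ := stepsize_sq_bounds hη0 hη
  have hPL' : ∀ x, 2 * μ * (F x - F xstar) ≤ ‖gradient F x‖ ^ 2 := fun x => by
    have := hPL x
    rwa [div_mul_eq_mul_div, one_mul, le_div_iff₀ (by positivity), mul_comm] at this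
  have hepoch : ∀ y, F (igIter (fun i => gradient (f i)) η y n) - F xstar
      ≤ (1 - n * μ * η / 2) * (F y - F xstar) + Lmax ^ 2 * η ^ 3 * n ^ 3 * σ ^ 2 := fun y => by
    have hdesc := igIter_epoch_descent _ y hFdiff hn hsmooth hsmooth_i hsum hSGC hLLmax hη0.le
      hstep hstepρ
    nlinarith [mul_le_mul_of_nonneg_left (hPL' y) (by positivity : 0 ≤ η * n / 4)]
  by_cases hμL : μ ≤ L
  · have hq0 : 0 ≤ 1 - n * μ * η / 2 := by
      have : η * Lmax * n ≤ 1 := by nlinarith [sq_nonneg (η * Lmax * n - 1)]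
      nlinarith [mul_le_mul_of_nonneg_right (hμL.trans hLLmax) (mul_pos hη0 hnR).le]
    have hq1 : 1 - n * μ * η / 2 < 1 := by linarith [mul_pos (mul_pos hnR hμ) hη0]
    refine (le_pow_mul_add_div_of_le_mul_add
      (a := fun t => F ((fun y => igIter (fun i => gradient (f i)) η y n)^[t] x0) - F xstar)
      (c := Lmax ^ 2 * η ^ 3 * n ^ 3 * σ ^ 2) hq0 hq1 (by positivity)
      (fun t => by simp only [Function.iterate_succ_apply']; exact hepoch _) T).trans_eq ?_
    rw [Function.iterate_zero_apply]
    field_simp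
    ring
  · have hconst := sub_eq_zero_of_pl_of_lt hFdiff hL hsmooth hmin hPL' (not_le.1 hμL)
    rw [hconst, hconst, mul_zero, zero_add]
    positivity

/-- Incremental gradient method for `μ`-PL objectives under the relaxed strong
growth condition: deterministic linear convergence to a noise-dominated
neighbourhood, where `igIter … n` applied `T` times is the iterate at the end
of epoch `T`. -/
theorem ig_pl_relaxed_sgc_rate
    (d n : ℕ) (hn : 0 < n)
    (f : Fin n → EuclideanSpace ℝ (Fin d) → ℝ)
    (hdiff : ∀ i, Differentiable ℝ (f i))
    (F : EuclideanSpace ℝ (Fin d) → ℝ)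
    (hF : F = fun x => (n : ℝ)⁻¹ * ∑ i, f i x)
    (L Lmax μ : ℝ) (hL : 0 < L) (hμ : 0 < μ) (hLLmax : L ≤ Lmax)
    (hsmooth : ∀ x y : EuclideanSpace ℝ (Fin d),
      ‖gradient F x - gradient F y‖ ≤ L * ‖x - y‖)
    (hsmooth_i : ∀ i, ∀ x y : EuclideanSpace ℝ (Fin d),
      ‖gradient (f i) x - gradient (f i) y‖ ≤ Lmax * ‖x - y‖)
    (xstar : EuclideanSpace ℝ (Fin d))
    (hmin : ∀ x, F xstar ≤ F x)
    (hPL : ∀ x, F x - F xstar ≤ 1 / (2 * μ) * ‖gradient F x‖ ^ 2)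
    (ρ σ : ℝ) (hρ : 1 ≤ ρ) (hσ : 0 ≤ σ)
    (hSGC : ∀ x, (n : ℝ)⁻¹ * ∑ i, ‖gradient (f i) x‖ ^ 2
      ≤ ρ * ‖gradient F x‖ ^ 2 + σ ^ 2)
    (η : ℝ) (hη0 : 0 < η)
    (hη : η ≤ min (1 / (Real.sqrt 2 * n * Lmax)) (1 / (2 * Lmax * n * Real.sqrt ρ)))
    (x0 : EuclideanSpace ℝ (Fin d)) (T : ℕ) :
    F ((fun y => igIter (fun i => gradient (f i)) η y n)^[T] x0) - F xstar
      ≤ (1 - n * μ * η / 2) ^ T * (F x0 - F xstar)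
        + 2 * Lmax ^ 2 * η ^ 2 * n ^ 2 * σ ^ 2 / μ :=
  ig_pl_relaxed_sgc_rate_general d n hn f hdiff F hF L Lmax μ hL hμ hLLmax hsmooth hsmooth_i xstar
    hmin hPL ρ σ hSGC η hη0 hη x0 T
end
end
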